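/- Let K be a field and (E,w) a row-finite weighted graph satisfying Condition (LPA). Then there exists a row-finite weighted graph (Ẽ,w̃) such that: the range of every weighted edge of (Ẽ,w̃) is a sink (emits no edges), no vertex of Ẽ emits two distinct weighted edges, no vertex of Ẽ receives two distinct weighted edges, and L_K(Ẽ,w̃) is isomorphic as a K-algebra to L_K(E,w). -/

import Mathlib

open FreeAlgebra
open scoped Classical

/-- A row-finite weighted graph: a directed graph with source `s`, range `r` and
a weight map `w : E¹ → {1,2,3,…}`, such that every vertex emits finitely many edges. -/
structure WGraph : Type 1 where
  V : Type
  E : Type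
  s : E → V
  r : E → V
  w : E → ℕ
  w_pos : ∀ e, 0 < w e
  rowFinite : ∀ v, {e | s e = v}.Finite

namespace WGraph

variable (G : WGraph)

/-- The weight of a vertex: `w(v) = max {w(e) : e ∈ s⁻¹(v)}` (with `max ∅ = 0`). -/
noncomputable def vw (v : G.V) : ℕ := (G.rowFinite v).toFinset.sup G.w

/-- One-step reachability: there is an edge from `u` to `v`. -/
def Adj (u v : G.V) : Prop := ∃ e, G.s e = u ∧ G.r e = v

/-- `u ≥ v`: there is a (possibly empty) path from `u` to `v`. -/
def Geq (u v : G.V) : Prop := Relation.ReflTransGen G.Adj u v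

/-- An edge is weighted if its weight is `> 1`. -/
def Weighted (e : G.E) : Prop := 1 < G.w e

/-- Two edges are in line. -/
def InLine (e f : G.E) : Prop := e = f ∨ G.Geq (G.r e) (G.s f) ∨ G.Geq (G.r f) (G.s e)

/-- `c` is a cycle based at `v`. -/
def IsCycleAt (c : List G.E) (v : G.V) : Prop :=
  ∃ h : c ≠ [], c.Chain' (fun a b => G.r a = G.s b) ∧ G.s (c.head h) = v ∧
    G.r (c.getLast h) = v ∧ (c.map G.s).Nodup

/-- Condition (LPA). -/
def LPA : Prop :=
  (∀ e f, G.Weighted e → G.Weighted f → G.s e = G.s f → e = f) ∧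
  (∀ v, (∃ g, G.Weighted g ∧ G.Geq (G.r g) v) → ∀ e f, G.s e = v → G.s f = v → e = f) ∧
  (∀ e f, G.Weighted e → G.Weighted f → ¬ G.InLine e f →
    ∀ v, ¬ (G.Geq (G.r e) v ∧ G.Geq (G.r f) v)) ∧
  (∀ e, G.Weighted e → ∀ v, G.Geq (G.r e) v → ∀ c, G.IsCycleAt c v → e ∈ c)

end WGraph

/-- The generators `v`, `e_i`, `e_i*` (for `1 ≤ i ≤ w(e)`) of the weighted
Leavitt path algebra. -/
inductive WGen (G : WGraph) : Type
  | vtx (v : G.V)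
  | edge (e : G.E) (i : ℕ) (h1 : 1 ≤ i) (h2 : i ≤ G.w e)
  | ghost (e : G.E) (i : ℕ) (h1 : 1 ≤ i) (h2 : i ≤ G.w e)

variable (G : WGraph) (K : Type) [Field K]

/-- The generator `v` in the free algebra. -/
def fvtx (v : G.V) : FreeAlgebra K (WGen G) := ι K (WGen.vtx v)

/-- The generator `e_i` in the free algebra, read as `0` when `i > w(e)`. -/
noncomputable def fedge (e : G.E) (i : ℕ) : FreeAlgebra K (WGen G) :=
  if h : 1 ≤ i ∧ i ≤ G.w e then ι K (WGen.edge e i h.1 h.2) else 0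

/-- The generator `e_i*` in the free algebra, read as `0` when `i > w(e)`. -/
noncomputable def fghost (e : G.E) (i : ℕ) : FreeAlgebra K (WGen G) :=
  if h : 1 ≤ i ∧ i ≤ G.w e then ι K (WGen.ghost e i h.1 h.2) else 0

/-- The defining relations of the weighted Leavitt path algebra. -/
inductive WRel : FreeAlgebra K (WGen G) → FreeAlgebra K (WGen G) → Prop
  | vtxMul (u v : G.V) :
      WRel (fvtx G K u * fvtx G K v) (if u = v then fvtx G K u else 0)
  | srcEdge (e : G.E) (i : ℕ) :
      WRel (fvtx G K (G.s e) * fedge G K e i) (fedge G K e i)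
  | edgeRng (e : G.E) (i : ℕ) :
      WRel (fedge G K e i * fvtx G K (G.r e)) (fedge G K e i)
  | rngGhost (e : G.E) (i : ℕ) :
      WRel (fvtx G K (G.r e) * fghost G K e i) (fghost G K e i)
  | ghostSrc (e : G.E) (i : ℕ) :
      WRel (fghost G K e i * fvtx G K (G.s e)) (fghost G K e i)
  | ck1 (v : G.V) (e f : G.E) (he : G.s e = v) (hf : G.s f = v) :
      WRel (∑ i ∈ Finset.Icc 1 (G.vw v), fghost G K e i * fedge G K f i)
           (if e = f then fvtx G K (G.r e) else 0)
  | ck2 (v : G.V) (i j : ℕ) (hi1 : 1 ≤ i) (hi2 : i ≤ G.vw v) (hj1 : 1 ≤ j) (hj2 : j ≤ G.vw v) :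
      WRel (∑ e ∈ (G.rowFinite v).toFinset, fedge G K e i * fghost G K e j)
           (if i = j then fvtx G K v else 0)

/-- The weighted Leavitt path algebra `L_K(E,w)`, presented by generators and relations. -/
abbrev WLPA : Type := RingQuot (WRel G K)

/-- The canonical quotient map from the free algebra to `L_K(E,w)`. -/
noncomputable def wmk : FreeAlgebra K (WGen G) →ₐ[K] WLPA G K :=
  RingQuot.mkAlgHom K (WRel G K)

/-- The image of a generator in `L_K(E,w)`. -/
noncomputable def gen (x : WGen G) : WLPA G K := wmk G K (ι K x)

/-- The image in `L_K(E,w)` of a word over the generating set. -/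
noncomputable def wordElem (xs : List (WGen G)) : WLPA G K := (xs.map (gen G K)).prod

/-- Source of a letter (with the usual conventions). -/
def gsrc : WGen G → G.V
  | .vtx v => v
  | .edge e _ _ _ => G.s e
  | .ghost e _ _ _ => G.r e

/-- Range of a letter (with the usual conventions). -/
def grng : WGen G → G.V
  | .vtx v => v
  | .edge e _ _ _ => G.r e
  | .ghost e _ _ _ => G.s e

/-- Whether a letter is a vertex letter. -/
def IsVertexLetter : WGen G → Prop
  | .vtx _ => True
  | _ => False

/-- A d-path: a nonempty word which is either a single vertex letter, or consists of
non-vertex letters with matching ranges and sources. -/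
def IsDPath (xs : List (WGen G)) : Prop :=
  (∃ v, xs = [WGen.vtx v]) ∨
  (xs ≠ [] ∧ (∀ x ∈ xs, ¬ IsVertexLetter G x) ∧ xs.Chain' (fun a b => grng G a = gsrc G b))

/-- `sp` is a choice of special edges: for every non-sink `v`, `sp v ∈ s⁻¹(v)`
and `w(sp v) = w(v)`. -/
def IsSpecialChoice (sp : G.V → G.E) : Prop :=
  ∀ v : G.V, (∃ e, G.s e = v) → G.s (sp v) = v ∧ G.w (sp v) = G.vw v

/-- The forbidden two-letter words: `(e^v)_i ((e^v)_j)*` for a special edge `e^v`, and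
`e_1* f_1` for arbitrary edges `e, f`. -/
def Forbidden (sp : G.V → G.E) : WGen G → WGen G → Prop
  | WGen.edge e _ _ _, WGen.ghost f _ _ _ => e = f ∧ sp (G.s e) = e
  | WGen.ghost _ i _ _, WGen.edge _ j _ _ => i = 1 ∧ j = 1
  | _, _ => False

/-- A nod-path: a d-path none of whose subwords is forbidden. -/
def IsNod (sp : G.V → G.E) (xs : List (WGen G)) : Prop :=
  IsDPath G xs ∧ xs.Chain' (fun a b => ¬ Forbidden G sp a b)

/-- The degree of a letter in `⊕_{i∈ℕ} ℤ`. -/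
noncomputable def gdeg : WGen G → (ℕ →₀ ℤ)
  | .vtx _ => 0
  | .edge _ i _ _ => Finsupp.single i 1
  | .ghost _ i _ _ => - Finsupp.single i 1

/-- The homogeneous component of degree `d` of `L_K(E,w)` with respect to the
canonical grading: the span of the images of all words of degree `d`. -/
noncomputable def homComp (d : ℕ →₀ ℤ) : Submodule K (WLPA G K) :=
  Submodule.span K {x | ∃ xs : List (WGen G), (xs.map (gdeg G)).sum = d ∧ x = wordElem G K xs}

/-- `V^(m)`: the span of all products of at most `m` elements of `V`. -/
def pileSpan (K A : Type) [Field K] [Ring A] [Algebra K A] (V : Set A) (m : ℕ) :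
    Submodule K A :=
  Submodule.span K {x | ∃ l : List A, l ≠ [] ∧ l.length ≤ m ∧ (∀ a ∈ l, a ∈ V) ∧ x = l.prod}

/-!
Write `T = T(r(E¹_w))`. By (LPA2) a vertex of `T` emits at most one edge, and by (LPA3), (LPA4)
it receives at most one edge emitted in `T`. The graph `(Ẽ, w̃)` keeps the edges emitted outside
`T` and replaces each edge `e` emitted in `T` by `w(e)` unweighted edges `flip e k : r(e) → s(e)`.
Because `e` is the only edge leaving `s(e)` and the `flip e k` are the only edges leaving `r(e)`,
the substitution `e_k ↦ (flip e k)*`, `e_k* ↦ flip e k` exchanges relation (iii) at `s(e)` with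
relation (iv) at `r(e)` and vice versa, while all other relations are left unchanged; so it
induces `L_K(E,w) ≅ L_K(Ẽ,w̃)`. The weighted edges of `Ẽ` are those of `E` emitted outside `T`.
Their ranges lie in `T`, so all edges `E` emits there were flipped away, and by (LPA3), (LPA4) no
flipped edge starts there either.
-/

section Presentation

variable {G G' : WGraph}

lemma wmk_eq_of_wRel {x y : FreeAlgebra K (WGen G)} (hxy : WRel G K x y) :
    wmk G K x = wmk G K y :=
  RingQuot.mkAlgHom_rel K hxy

lemma fedge_eq_zero_or (e : G.E) (i : ℕ) : fedge G K e i = 0 ∨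
    ∃ x, fedge G K e i = ι K x ∧ gsrc G x = G.s e ∧ grng G x = G.r e := by
  unfold fedge
  split_ifs
  exacts [Or.inr ⟨_, rfl, rfl, rfl⟩, Or.inl rfl]

lemma fghost_eq_zero_or (e : G.E) (i : ℕ) : fghost G K e i = 0 ∨
    ∃ x, fghost G K e i = ι K x ∧ gsrc G x = G.r e ∧ grng G x = G.s e := by
  unfold fghost
  split_ifs
  exacts [Or.inr ⟨_, rfl, rfl, rfl⟩, Or.inl rfl]

lemma gen_vtx_gsrc_mul (x : WGen G) : gen G K (.vtx (gsrc G x)) * gen G K x = gen G K x := by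
  rcases x with v | ⟨e, i, h1, h2⟩ | ⟨e, i, h1, h2⟩
  · simpa [gen, fvtx, gsrc, grng] using wmk_eq_of_wRel K (WRel.vtxMul (K := K) v v)
  · simpa [gen, fvtx, gsrc, grng, fedge, h1, h2] using
      wmk_eq_of_wRel K (WRel.srcEdge (K := K) e i)
  · simpa [gen, fvtx, gsrc, grng, fghost, h1, h2] using
      wmk_eq_of_wRel K (WRel.rngGhost (K := K) e i)

lemma gen_mul_vtx_grng (x : WGen G) : gen G K x * gen G K (.vtx (grng G x)) = gen G K x := by
  rcases x with v | ⟨e, i, h1, h2⟩ | ⟨e, i, h1, h2⟩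
  · simpa [gen, fvtx, gsrc, grng] using wmk_eq_of_wRel K (WRel.vtxMul (K := K) v v)
  · simpa [gen, fvtx, gsrc, grng, fedge, h1, h2] using
      wmk_eq_of_wRel K (WRel.edgeRng (K := K) e i)
  · simpa [gen, fvtx, gsrc, grng, fghost, h1, h2] using
      wmk_eq_of_wRel K (WRel.ghostSrc (K := K) e i)

noncomputable def genMap (φ : WGen G → WGen G') :
    FreeAlgebra K (WGen G) →ₐ[K] FreeAlgebra K (WGen G') :=
  FreeAlgebra.lift K (ι K ∘ φ)

@[simp] lemma genMap_ι (φ : WGen G → WGen G') (x : WGen G) :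
    genMap K φ (ι K x) = ι K (φ x) := by
  simp [genMap]

lemma wmk_genMap_eq_of_wRel (φ : WGen G → WGen G') {ψ : G.V → G'.V}
    (hψ : Function.Injective ψ) (hvtx : ∀ v, φ (.vtx v) = .vtx (ψ v))
    (hsrc : ∀ x, gsrc G' (φ x) = ψ (gsrc G x)) (hrng : ∀ x, grng G' (φ x) = ψ (grng G x))
    (hck1 : ∀ v e f, G.s e = v → G.s f = v →
      wmk G' K (genMap K φ (∑ i ∈ Finset.Icc 1 (G.vw v), fghost G K e i * fedge G K f i)) =
        wmk G' K (genMap K φ (if e = f then fvtx G K (G.r e) else 0)))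
    (hck2 : ∀ v i j, 1 ≤ i → i ≤ G.vw v → 1 ≤ j → j ≤ G.vw v →
      wmk G' K (genMap K φ (∑ e ∈ (G.rowFinite v).toFinset, fedge G K e i * fghost G K e j)) =
        wmk G' K (genMap K φ (if i = j then fvtx G K v else 0))) :
    ∀ ⦃x y⦄, WRel G K x y → wmk G' K (genMap K φ x) = wmk G' K (genMap K φ y) := by
  have hv (v : G.V) : genMap K φ (fvtx G K v) = fvtx G' K (ψ v) := by
    rw [fvtx, genMap_ι, hvtx, fvtx]
  have hleft (x : WGen G) :
      wmk G' K (genMap K φ (fvtx G K (gsrc G x) * ι K x)) = wmk G' K (genMap K φ (ι K x)) := by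
    rw [map_mul, hv, genMap_ι, ← hsrc, map_mul]
    exact gen_vtx_gsrc_mul K (φ x)
  have hright (x : WGen G) :
      wmk G' K (genMap K φ (ι K x * fvtx G K (grng G x))) = wmk G' K (genMap K φ (ι K x)) := by
    rw [map_mul, hv, genMap_ι, ← hrng, map_mul]
    exact gen_mul_vtx_grng K (φ x)
  intro x y hxy
  cases hxy with
  | vtxMul u v =>
      rw [map_mul, hv, hv, apply_ite (genMap K φ), hv, map_zero, ← hψ.eq_iff]
      exact wmk_eq_of_wRel K (WRel.vtxMul _ _)
  | srcEdge e i =>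
      rcases fedge_eq_zero_or K e i with h0 | ⟨x, hx, hs, -⟩
      · simp [h0]
      · rw [hx, ← hs, hleft]
  | edgeRng e i =>
      rcases fedge_eq_zero_or K e i with h0 | ⟨x, hx, -, hr⟩
      · simp [h0]
      · rw [hx, ← hr, hright]
  | rngGhost e i =>
      rcases fghost_eq_zero_or K e i with h0 | ⟨x, hx, hs, -⟩
      · simp [h0]
      · rw [hx, ← hs, hleft]
  | ghostSrc e i =>
      rcases fghost_eq_zero_or K e i with h0 | ⟨x, hx, -, hr⟩
      · simp [h0]
      · rw [hx, ← hr, hright]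
  | ck1 v e f he hf => exact hck1 v e f he hf
  | ck2 v i j hi1 hi2 hj1 hj2 => exact hck2 v i j hi1 hi2 hj1 hj2

noncomputable def algEquivOfGenEquiv (φ : WGen G ≃ WGen G')
    (hφ : ∀ ⦃x y⦄, WRel G K x y → wmk G' K (genMap K φ x) = wmk G' K (genMap K φ y))
    (hφ' : ∀ ⦃x y⦄, WRel G' K x y →
      wmk G K (genMap K φ.symm x) = wmk G K (genMap K φ.symm y)) :
    WLPA G K ≃ₐ[K] WLPA G' K :=
  AlgEquiv.ofAlgHom (RingQuot.liftAlgHom K ⟨(wmk G' K).comp (genMap K φ), hφ⟩)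
    (RingQuot.liftAlgHom K ⟨(wmk G K).comp (genMap K φ.symm), hφ'⟩)
    (RingQuot.ringQuot_ext' _ _ _ <| FreeAlgebra.hom_ext <| funext fun x => by
      simp [wmk, RingQuot.liftAlgHom_mkAlgHom_apply])
    (RingQuot.ringQuot_ext' _ _ _ <| FreeAlgebra.hom_ext <| funext fun x => by
      simp [wmk, RingQuot.liftAlgHom_mkAlgHom_apply])

end Presentation

namespace WGraph

variable {G : WGraph}

/-- The set `T(r(E¹_w))`. -/
def weightedTree (G : WGraph) : Set G.V := {v | ∃ e, G.Weighted e ∧ G.Geq (G.r e) v}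

lemma mem_weightedTree_of_geq {u v : G.V} (hu : u ∈ G.weightedTree) (huv : G.Geq u v) :
    v ∈ G.weightedTree :=
  let ⟨e, he, heu⟩ := hu
  ⟨e, he, heu.trans huv⟩

lemma r_mem_weightedTree {e : G.E} (he : G.Weighted e) : G.r e ∈ G.weightedTree :=
  ⟨e, he, .refl⟩

lemma mem_rowFinite_toFinset {v : G.V} {e : G.E} :
    e ∈ (G.rowFinite v).toFinset ↔ G.s e = v :=
  Set.Finite.mem_toFinset _

lemma exists_s_eq_of_vw_ne_zero {v : G.V} (hv : G.vw v ≠ 0) : ∃ e, G.s e = v := by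
  by_contra! hsink
  refine hv (Finset.sup_eq_bot_iff _ _ |>.mpr fun e he => ?_)
  exact absurd (mem_rowFinite_toFinset.mp he) (hsink e)

namespace LPA

lemma eq_of_s_eq (h : G.LPA) {e f : G.E} (he : G.s e ∈ G.weightedTree) (hef : G.s e = G.s f) :
    e = f :=
  h.2.1 _ he e f rfl hef.symm

lemma inLine (h : G.LPA) {e f : G.E} (he : G.Weighted e) (hf : G.Weighted f) {x : G.V}
    (hex : G.Geq (G.r e) x) (hfx : G.Geq (G.r f) x) : G.InLine e f := by
  by_contra hnot
  exact h.2.2.1 e f he hf hnot x ⟨hex, hfx⟩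

lemma rowFinite_toFinset_eq (h : G.LPA) {e : G.E} (he : G.s e ∈ G.weightedTree) :
    (G.rowFinite (G.s e)).toFinset = {e} := by
  ext f
  rw [mem_rowFinite_toFinset, Finset.mem_singleton]
  exact ⟨fun hf => (h.eq_of_s_eq he hf.symm).symm, fun hf => hf ▸ rfl⟩

lemma vw_s (h : G.LPA) {e : G.E} (he : G.s e ∈ G.weightedTree) : G.vw (G.s e) = G.w e := by
  rw [vw, h.rowFinite_toFinset_eq he, Finset.sup_singleton]

end LPA

def IsWalk (G : WGraph) : List G.E → G.V → G.V → Prop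
  | [], a, b => a = b
  | e :: l, a, b => G.s e = a ∧ G.IsWalk l (G.r e) b

lemma exists_isWalk_of_geq {a b : G.V} (hab : G.Geq a b) : ∃ l, G.IsWalk l a b := by
  induction hab using Relation.ReflTransGen.head_induction_on with
  | refl => exact ⟨[], rfl⟩
  | head hac _ ih =>
      obtain ⟨e, he, rfl⟩ := hac
      obtain ⟨l, hl⟩ := ih
      exact ⟨e :: l, he, hl⟩

lemma IsWalk.geq_s {l : List G.E} {a b : G.V} (hl : G.IsWalk l a b) {e : G.E} (he : e ∈ l) :
    G.Geq a (G.s e) := by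
  induction l generalizing a with
  | nil => cases he
  | cons f l ih =>
      obtain ⟨rfl, hl⟩ := hl
      rcases List.mem_cons.mp he with rfl | he
      · exact .refl
      · exact .head ⟨f, rfl, rfl⟩ (ih hl he)

lemma IsWalk.exists_suffix {l : List G.E} {a b : G.V} (hl : G.IsWalk l a b) {e : G.E}
    (he : e ∈ l) : ∃ l', e :: l' <:+ l ∧ G.IsWalk (e :: l') (G.s e) b := by
  induction l generalizing a with
  | nil => cases he
  | cons f l ih =>
      obtain ⟨rfl, hl⟩ := hl
      rcases List.mem_cons.mp he with rfl | he
      · exact ⟨l, List.suffix_refl _, rfl, hl⟩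
      · obtain ⟨l', hsuf, hl'⟩ := ih hl he
        exact ⟨l', hsuf.trans (List.suffix_cons f l), hl'⟩

lemma IsWalk.exists_nodup {l : List G.E} {a b : G.V} (hl : G.IsWalk l a b) :
    ∃ l', G.IsWalk l' a b ∧ (l'.map G.s).Nodup ∧ b ∉ l'.map G.s := by
  induction l generalizing a with
  | nil => exact ⟨[], hl, List.nodup_nil, List.not_mem_nil⟩
  | cons e l ih =>
      obtain ⟨rfl, hl⟩ := hl
      obtain ⟨t, ht, hnd, hb⟩ := ih hl
      by_cases hsb : G.s e = b
      · exact ⟨[], hsb, List.nodup_nil, List.not_mem_nil⟩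
      by_cases hst : G.s e ∈ t.map G.s
      · obtain ⟨f, hf, hfe⟩ := List.mem_map.mp hst
        obtain ⟨t', hsuf, ht'⟩ := ht.exists_suffix hf
        refine ⟨f :: t', hfe ▸ ht', hnd.sublist (hsuf.sublist.map _), fun hbt => hb ?_⟩
        exact (hsuf.sublist.map _).subset hbt
      · refine ⟨e :: t, ⟨rfl, ht⟩, List.nodup_cons.mpr ⟨hst, hnd⟩, ?_⟩
        simp only [List.map_cons, List.mem_cons, not_or]
        exact ⟨Ne.symm hsb, hb⟩

lemma IsWalk.isChain {l : List G.E} {a b : G.V} (hl : G.IsWalk l a b) :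
    l.IsChain (fun e f => G.r e = G.s f) := by
  induction l generalizing a with
  | nil => exact .nil
  | cons e l ih =>
      obtain ⟨-, hl⟩ := hl
      cases l with
      | nil => exact .singleton e
      | cons f l => exact .cons_cons hl.1.symm (ih hl)

lemma IsWalk.r_getLast {l : List G.E} {a b : G.V} (hl : G.IsWalk l a b) (hne : l ≠ []) :
    G.r (l.getLast hne) = b := by
  induction l generalizing a with
  | nil => exact absurd rfl hne
  | cons e l ih =>
      obtain ⟨-, hl⟩ := hl
      cases l with
      | nil => exact hl
      | cons f l => exact ih hl (List.cons_ne_nil f l)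

lemma exists_isCycleAt_of_transGen {x : G.V} (hx : Relation.TransGen G.Adj x x) :
    ∃ c, G.IsCycleAt c x ∧ ∀ e ∈ c, G.Geq x (G.s e) := by
  obtain ⟨-, ⟨e, rfl, rfl⟩, hex⟩ := Relation.TransGen.head'_iff.mp hx
  obtain ⟨l, hl⟩ := exists_isWalk_of_geq hex
  obtain ⟨t, ht, hnd, het⟩ := hl.exists_nodup
  have hwalk : G.IsWalk (e :: t) (G.s e) (G.s e) := ⟨rfl, ht⟩
  refine ⟨e :: t, ⟨List.cons_ne_nil e t, hwalk.isChain, rfl, hwalk.r_getLast _, ?_⟩,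
    fun f hf => hwalk.geq_s hf⟩
  exact List.nodup_cons.mpr ⟨het, hnd⟩

lemma LPA.geq_s_of_transGen (h : G.LPA) {e : G.E} (he : G.Weighted e) {x : G.V}
    (hex : G.Geq (G.r e) x) (hx : Relation.TransGen G.Adj x x) : G.Geq x (G.s e) := by
  obtain ⟨c, hc, hcx⟩ := exists_isCycleAt_of_transGen hx
  exact hcx e (h.2.2.2 e he x hex c hc)

lemma LPA.r_ne_of_s_not_mem (h : G.LPA) {e g : G.E} (he : G.Weighted e)
    (hse : G.s e ∉ G.weightedTree) (hg : G.s g ∈ G.weightedTree) : G.r g ≠ G.r e := by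
  intro hr
  obtain ⟨f, hf, hfg⟩ := hg
  have hges : G.Geq (G.r e) (G.s g) := by
    rcases h.inLine he hf .refl (hr ▸ hfg.tail ⟨g, rfl, rfl⟩) with rfl | hef | hfe
    · exact hfg
    · exact hef.trans (.head ⟨f, rfl, rfl⟩ hfg)
    · exact absurd ⟨f, hf, hfe⟩ hse
  exact hse ⟨e, he, h.geq_s_of_transGen he .refl (.tail' hges ⟨g, rfl, hr⟩)⟩

noncomputable def next (G : WGraph) (v : G.V) : G.V :=
  if hv : ∃ e, G.s e = v then G.r hv.choose else v

lemma geq_next (v : G.V) : G.Geq v (G.next v) := by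
  unfold next
  split_ifs with hv
  · exact .single ⟨_, hv.choose_spec, rfl⟩
  · exact .refl

lemma geq_iterate_next (v : G.V) (n : ℕ) : G.Geq v (G.next^[n] v) := by
  induction n with
  | zero => exact .refl
  | succ n ih => exact (Function.iterate_succ_apply' G.next n v) ▸ ih.trans (geq_next _)

lemma LPA.next_s (h : G.LPA) {e : G.E} (he : G.s e ∈ G.weightedTree) :
    G.next (G.s e) = G.r e := by
  have hv : ∃ f, G.s f = G.s e := ⟨e, rfl⟩
  rw [next, dif_pos hv, h.eq_of_s_eq (by rw [hv.choose_spec]; exact he) hv.choose_spec]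

lemma LPA.exists_iterate_of_geq (h : G.LPA) {u v : G.V} (hu : u ∈ G.weightedTree)
    (huv : G.Geq u v) : ∃ n, G.next^[n] u = v := by
  induction huv with
  | refl => exact ⟨0, rfl⟩
  | tail huw hwv ih =>
      obtain ⟨n, rfl⟩ := ih
      obtain ⟨e, he, rfl⟩ := hwv
      refine ⟨n + 1, ?_⟩
      rw [Function.iterate_succ_apply', ← he,
        h.next_s (he ▸ mem_weightedTree_of_geq hu huw)]

lemma LPA.geq_total (h : G.LPA) {u a b : G.V} (hu : u ∈ G.weightedTree) (hua : G.Geq u a)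
    (hub : G.Geq u b) : G.Geq a b ∨ G.Geq b a := by
  obtain ⟨m, rfl⟩ := h.exists_iterate_of_geq hu hua
  obtain ⟨n, rfl⟩ := h.exists_iterate_of_geq hu hub
  rcases le_total m n with hmn | hnm
  · left
    rw [← Nat.sub_add_cancel hmn, Function.iterate_add_apply]
    exact geq_iterate_next _ _
  · right
    rw [← Nat.sub_add_cancel hnm, Function.iterate_add_apply]
    exact geq_iterate_next _ _

lemma LPA.mem_periodicPts (h : G.LPA) {a : G.V} (ha : a ∈ G.weightedTree)
    (hback : G.Geq (G.next a) a) : a ∈ Function.periodicPts G.next := by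
  obtain ⟨n, hn⟩ :=
    h.exists_iterate_of_geq (mem_weightedTree_of_geq ha (geq_next a)) hback
  exact Function.mk_mem_periodicPts n.succ_pos hn

lemma LPA.exists_common_weighted (h : G.LPA) {u u' x : G.V} (hu : u ∈ G.weightedTree)
    (hu' : u' ∈ G.weightedTree) (hux : G.Geq u x) (hux' : G.Geq u' x) :
    ∃ e, G.Weighted e ∧ G.Geq (G.r e) u ∧ G.Geq (G.r e) u' := by
  obtain ⟨e, he, heu⟩ := hu
  obtain ⟨f, hf, hfu'⟩ := hu'
  rcases h.inLine he hf (heu.trans hux) (hfu'.trans hux') with rfl | hef | hfe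
  · exact ⟨e, he, heu, hfu'⟩
  · exact ⟨e, he, heu, hef.trans (.head ⟨f, rfl, rfl⟩ hfu')⟩
  · exact ⟨f, hf, hfe.trans (.head ⟨e, rfl, rfl⟩ heu), hfu'⟩

/-- By (LPA3) and (LPA4) both sources lie on a cycle through the common range, and `next` is
injective on cycles. -/
lemma LPA.eq_of_r_eq (h : G.LPA) {g g' : G.E} (hg : G.s g ∈ G.weightedTree)
    (hg' : G.s g' ∈ G.weightedTree) (hr : G.r g = G.r g') : g = g' := by
  obtain ⟨e, he, heg, heg'⟩ := h.exists_common_weighted hg hg'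
    (.single ⟨g, rfl, rfl⟩) (hr ▸ .single ⟨g', rfl, rfl⟩)
  wlog hgg' : G.Geq (G.s g) (G.s g') generalizing g g'
  · rcases h.geq_total (r_mem_weightedTree he) heg heg' with hgg'' | hg'g
    · exact absurd hgg'' hgg'
    · exact (this hg' hg hr.symm heg' heg hg'g).symm
  rcases hgg'.cases_head with hs | ⟨y, ⟨f, hf, rfl⟩, hyg'⟩
  · exact h.eq_of_s_eq hg hs
  obtain rfl : f = g := h.eq_of_s_eq (hf ▸ hg) hf
  have hcyc : Relation.TransGen G.Adj (G.r f) (G.r f) := .tail' hyg' ⟨g', rfl, hr.symm⟩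
  have hre : G.Geq (G.r f) (G.r e) :=
    (h.geq_s_of_transGen he (heg.tail ⟨f, rfl, rfl⟩) hcyc).tail ⟨e, rfl, rfl⟩
  have hper : G.s f ∈ Function.periodicPts G.next :=
    h.mem_periodicPts hg (h.next_s hg ▸ hre.trans heg)
  have hper' : G.s g' ∈ Function.periodicPts G.next :=
    h.mem_periodicPts hg' (h.next_s hg' ▸ hr ▸ hre.trans heg')
  exact h.eq_of_s_eq hg
    ((Function.bijOn_periodicPts G.next).injOn hper hper' (by rw [h.next_s hg, h.next_s hg', hr]))

inductive RevEdge (G : WGraph) : Type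
  | keep (e : G.E) (hs : G.s e ∉ G.weightedTree)
  | flip (e : G.E) (k : ℕ) (hs : G.s e ∈ G.weightedTree) (h1 : 1 ≤ k) (h2 : k ≤ G.w e)

namespace RevEdge

def src : G.RevEdge → G.V
  | keep e _ => G.s e
  | flip e _ _ _ _ => G.r e

def rng : G.RevEdge → G.V
  | keep e _ => G.r e
  | flip e _ _ _ _ => G.s e

def weight : G.RevEdge → ℕ
  | keep e _ => G.w e
  | flip _ _ _ _ _ => 1

def toPair : G.RevEdge → G.E × ℕ
  | keep e _ => (e, 0)
  | flip e k _ _ _ => (e, k)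

lemma toPair_injective : Function.Injective (toPair (G := G)) := by
  rintro (⟨e, _⟩ | ⟨e, k, _, hk, _⟩) (⟨f, _⟩ | ⟨f, l, _, hl, _⟩) hef <;>
    simp_all [toPair] <;> omega

lemma finite_src_eq (h : G.LPA) (v : G.V) : {x : G.RevEdge | x.src = v}.Finite := by
  have hin : {g | G.s g ∈ G.weightedTree ∧ G.r g = v}.Subsingleton :=
    fun g hg g' hg' => h.eq_of_r_eq hg.1 hg'.1 (hg.2.trans hg'.2.symm)
  have hfin := ((G.rowFinite v).prod (Set.finite_singleton 0)).union
    (hin.finite.biUnion fun g _ => (Set.finite_singleton g).prod (Set.finite_Icc 1 (G.w g)))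
  refine (hfin.preimage toPair_injective.injOn).subset ?_
  rintro (⟨e, _⟩ | ⟨e, k, hs, h1, h2⟩) rfl
  · exact Or.inl ⟨rfl, rfl⟩
  · exact Or.inr (Set.mem_biUnion (x := e) ⟨hs, rfl⟩ ⟨rfl, h1, h2⟩)

lemma exists_eq_keep {x : G.RevEdge} (hx : x.src ∉ G.weightedTree) :
    ∃ e hs, x = keep e hs := by
  rcases x with ⟨e, hs⟩ | ⟨g, k, hg, _, _⟩
  · exact ⟨e, hs, rfl⟩
  · exact absurd (mem_weightedTree_of_geq hg (.single ⟨g, rfl, rfl⟩)) hx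

lemma exists_eq_flip {x : G.RevEdge} (hx : x.src ∈ G.weightedTree) :
    ∃ g k hg h1 h2, x = flip g k hg h1 h2 := by
  rcases x with ⟨e, hs⟩ | ⟨g, k, hg, h1, h2⟩
  · exact absurd hx hs
  · exact ⟨g, k, hg, h1, h2, rfl⟩

lemma exists_eq_flip_of_src_eq (h : G.LPA) {g : G.E} (hg : G.s g ∈ G.weightedTree)
    {x : G.RevEdge} (hx : x.src = G.r g) : ∃ k h1 h2, x = flip g k hg h1 h2 := by
  obtain ⟨g', k, hg', h1, h2, rfl⟩ :=
    exists_eq_flip (hx ▸ mem_weightedTree_of_geq hg (.single ⟨g, rfl, rfl⟩))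
  obtain rfl := h.eq_of_r_eq hg' hg hx
  exact ⟨k, h1, h2, rfl⟩

end RevEdge

/-- The graph `(Ẽ, w̃)`. -/
noncomputable abbrev reverseTree (G : WGraph) (h : G.LPA) : WGraph where
  V := G.V
  E := G.RevEdge
  s := RevEdge.src
  r := RevEdge.rng
  w := RevEdge.weight
  w_pos := by rintro (⟨e, _⟩ | _) <;> simp [RevEdge.weight, G.w_pos]
  rowFinite := RevEdge.finite_src_eq h

variable (h : G.LPA)

lemma reverseTree_s_ne_r_of_weighted : ∀ x, (G.reverseTree h).Weighted x →
    ∀ y, (G.reverseTree h).s y ≠ (G.reverseTree h).r x := by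
  rintro (⟨e, hse⟩ | ⟨_, _, _, _, _⟩) hx (⟨f, hsf⟩ | ⟨g, k, hsg, _, _⟩) hyx
  · exact hsf ((hyx : G.s f = G.r e) ▸ r_mem_weightedTree hx)
  · exact h.r_ne_of_s_not_mem hx hse hsg hyx
  all_goals exact absurd hx (lt_irrefl 1)

lemma reverseTree_eq_of_weighted_of_s_eq : ∀ x y, (G.reverseTree h).Weighted x →
    (G.reverseTree h).Weighted y → (G.reverseTree h).s x = (G.reverseTree h).s y → x = y := by
  rintro (⟨e, _⟩ | ⟨_, _, _, _, _⟩) (⟨f, _⟩ | ⟨_, _, _, _, _⟩) hx hy hxy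
  · obtain rfl := h.1 e f hx hy hxy
    rfl
  all_goals first | exact absurd hx (lt_irrefl 1) | exact absurd hy (lt_irrefl 1)

lemma reverseTree_eq_of_weighted_of_r_eq : ∀ x y, (G.reverseTree h).Weighted x →
    (G.reverseTree h).Weighted y → (G.reverseTree h).r x = (G.reverseTree h).r y → x = y := by
  rintro (⟨e, hse⟩ | ⟨_, _, _, _, _⟩) (⟨f, hsf⟩ | ⟨_, _, _, _, _⟩) hx hy hxy
  · rcases h.inLine hx hy .refl (hxy ▸ .refl) with rfl | hef | hfe
    · rfl
    · exact absurd ⟨e, hx, hef⟩ hsf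
    · exact absurd ⟨f, hy, hfe⟩ hse
  all_goals first | exact absurd hx (lt_irrefl 1) | exact absurd hy (lt_irrefl 1)

lemma sum_rowFinite_reverseTree_of_not_mem {M : Type*} [AddCommMonoid M] {v : G.V}
    (hv : v ∉ G.weightedTree) {F : G.RevEdge → M} {f : G.E → M}
    (hFf : ∀ e hs, F (.keep e hs) = f e) :
    ∑ x ∈ ((G.reverseTree h).rowFinite v).toFinset, F x =
      ∑ e ∈ (G.rowFinite v).toFinset, f e := by
  have hkeep (x : G.RevEdge) (hx : x ∈ ((G.reverseTree h).rowFinite v).toFinset) :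
      ∃ e hs, x = RevEdge.keep e hs := by
    have hxv : x.src = v := mem_rowFinite_toFinset.mp hx
    exact RevEdge.exists_eq_keep (hxv ▸ hv)
  refine Finset.sum_bij' (fun x _ => x.toPair.1)
    (fun e he => .keep e (mem_rowFinite_toFinset.mp he ▸ hv)) ?_ ?_ ?_ ?_ ?_
  · intro x hx
    obtain ⟨e, hs, rfl⟩ := hkeep x hx
    exact mem_rowFinite_toFinset.mpr ((mem_rowFinite_toFinset (G := G.reverseTree h)).mp hx)
  · intro e he
    exact mem_rowFinite_toFinset.mpr (mem_rowFinite_toFinset.mp he : G.s e = v)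
  · intro x hx
    obtain ⟨e, hs, rfl⟩ := hkeep x hx
    rfl
  · intro e he
    rfl
  · intro x hx
    obtain ⟨e, hs, rfl⟩ := hkeep x hx
    exact hFf e hs

lemma sum_rowFinite_reverseTree_r {M : Type*} [AddCommMonoid M] {g : G.E}
    (hg : G.s g ∈ G.weightedTree) {F : G.RevEdge → M} {f : ℕ → M}
    (hFf : ∀ k h1 h2, F (.flip g k hg h1 h2) = f k) :
    ∑ x ∈ ((G.reverseTree h).rowFinite (G.r g)).toFinset, F x =
      ∑ k ∈ Finset.Icc 1 (G.w g), f k := by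
  have hflip (x : G.RevEdge) (hx : x ∈ ((G.reverseTree h).rowFinite (G.r g)).toFinset) :
      ∃ k h1 h2, x = RevEdge.flip g k hg h1 h2 :=
    RevEdge.exists_eq_flip_of_src_eq h hg (mem_rowFinite_toFinset.mp hx)
  refine Finset.sum_bij' (fun x _ => x.toPair.2)
    (fun k hk => .flip g k hg (Finset.mem_Icc.mp hk).1 (Finset.mem_Icc.mp hk).2) ?_ ?_ ?_ ?_ ?_
  · intro x hx
    obtain ⟨k, h1, h2, rfl⟩ := hflip x hx
    exact Finset.mem_Icc.mpr ⟨h1, h2⟩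
  · intro k hk
    exact mem_rowFinite_toFinset.mpr rfl
  · intro x hx
    obtain ⟨k, h1, h2, rfl⟩ := hflip x hx
    rfl
  · intro k hk
    rfl
  · intro x hx
    obtain ⟨k, h1, h2, rfl⟩ := hflip x hx
    exact hFf k h1 h2

lemma vw_reverseTree_of_not_mem {v : G.V} (hv : v ∉ G.weightedTree) :
    (G.reverseTree h).vw v = G.vw v := by
  apply le_antisymm
  · refine Finset.sup_le fun x hx => ?_
    obtain ⟨e, hs, rfl⟩ := RevEdge.exists_eq_keep (mem_rowFinite_toFinset.mp hx ▸ hv)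
    exact Finset.le_sup (f := G.w)
      (mem_rowFinite_toFinset.mpr ((mem_rowFinite_toFinset (G := G.reverseTree h)).mp hx))
  · refine Finset.sup_le fun e he => ?_
    have hs : G.s e = v := mem_rowFinite_toFinset.mp he
    exact Finset.le_sup (f := (G.reverseTree h).w) (b := .keep e (hs ▸ hv))
      (mem_rowFinite_toFinset.mpr hs)

lemma vw_reverseTree_r {g : G.E} (hg : G.s g ∈ G.weightedTree) :
    (G.reverseTree h).vw (G.r g) = 1 := by
  apply le_antisymm
  · refine Finset.sup_le fun x hx => ?_
    obtain ⟨k, h1, h2, rfl⟩ :=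
      RevEdge.exists_eq_flip_of_src_eq h hg (mem_rowFinite_toFinset.mp hx)
    exact le_rfl
  · exact Finset.le_sup (f := (G.reverseTree h).w) (b := .flip g 1 hg le_rfl (G.w_pos g))
      (mem_rowFinite_toFinset.mpr rfl)

noncomputable def revGen : WGen G → WGen (G.reverseTree h)
  | .vtx v => .vtx v
  | .edge e i h1 h2 =>
      if hs : G.s e ∈ G.weightedTree then .ghost (.flip e i hs h1 h2) 1 le_rfl le_rfl
      else .edge (.keep e hs) i h1 h2
  | .ghost e i h1 h2 =>
      if hs : G.s e ∈ G.weightedTree then .edge (.flip e i hs h1 h2) 1 le_rfl le_rfl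
      else .ghost (.keep e hs) i h1 h2

def unrevGen : WGen (G.reverseTree h) → WGen G
  | .vtx v => .vtx v
  | .edge (.keep e _) i h1 h2 => .edge e i h1 h2
  | .edge (.flip e k _ h1 h2) _ _ _ => .ghost e k h1 h2
  | .ghost (.keep e _) i h1 h2 => .ghost e i h1 h2
  | .ghost (.flip e k _ h1 h2) _ _ _ => .edge e k h1 h2

noncomputable def revGenEquiv : WGen G ≃ WGen (G.reverseTree h) where
  toFun := revGen h
  invFun := unrevGen h
  left_inv := by
    rintro (v | ⟨e, i, h1, h2⟩ | ⟨e, i, h1, h2⟩)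
    · rfl
    all_goals by_cases hs : G.s e ∈ G.weightedTree <;> simp [revGen, unrevGen, hs]
  right_inv := by
    rintro (v | ⟨⟨e, hs⟩ | ⟨e, k, hs, h1, h2⟩, i, hi1, hi2⟩ |
      ⟨⟨e, hs⟩ | ⟨e, k, hs, h1, h2⟩, i, hi1, hi2⟩)
    · rfl
    · simp [unrevGen, revGen, hs]
    · obtain rfl : i = 1 := le_antisymm hi2 hi1
      simp [unrevGen, revGen, hs]
    · simp [unrevGen, revGen, hs]
    · obtain rfl : i = 1 := le_antisymm hi2 hi1
      simp [unrevGen, revGen, hs]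

lemma gsrc_revGen (x : WGen G) : gsrc _ (revGen h x) = gsrc G x := by
  rcases x with _ | ⟨e, _⟩ | ⟨e, _⟩ <;> simp only [revGen] <;> (try split_ifs) <;> rfl

lemma grng_revGen (x : WGen G) : grng _ (revGen h x) = grng G x := by
  rcases x with _ | ⟨e, _⟩ | ⟨e, _⟩ <;> simp only [revGen] <;> (try split_ifs) <;> rfl

lemma gsrc_unrevGen (x : WGen (G.reverseTree h)) : gsrc G (unrevGen h x) = gsrc _ x := by
  rcases x with _ | ⟨_ | _, _⟩ | ⟨_ | _, _⟩ <;> rfl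

lemma grng_unrevGen (x : WGen (G.reverseTree h)) : grng G (unrevGen h x) = grng _ x := by
  rcases x with _ | ⟨_ | _, _⟩ | ⟨_ | _, _⟩ <;> rfl

section images

variable {e : G.E}

lemma genMap_revGen_fvtx (v : G.V) :
    genMap K (revGen h) (fvtx G K v) = fvtx (G.reverseTree h) K v := by
  simp [fvtx, revGen]

lemma genMap_revGen_fedge_keep (hs : G.s e ∉ G.weightedTree) (i : ℕ) :
    genMap K (revGen h) (fedge G K e i) = fedge (G.reverseTree h) K (.keep e hs) i := by
  by_cases hi : 1 ≤ i ∧ i ≤ G.w e <;> simp [fedge, hi, revGen, hs, RevEdge.weight]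

lemma genMap_revGen_fghost_keep (hs : G.s e ∉ G.weightedTree) (i : ℕ) :
    genMap K (revGen h) (fghost G K e i) = fghost (G.reverseTree h) K (.keep e hs) i := by
  by_cases hi : 1 ≤ i ∧ i ≤ G.w e <;> simp [fghost, hi, revGen, hs, RevEdge.weight]

lemma genMap_revGen_fedge_flip {i : ℕ} (hs : G.s e ∈ G.weightedTree) (h1 : 1 ≤ i)
    (h2 : i ≤ G.w e) :
    genMap K (revGen h) (fedge G K e i) = fghost (G.reverseTree h) K (.flip e i hs h1 h2) 1 := by
  simp [fedge, fghost, h1, h2, revGen, hs, RevEdge.weight]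

lemma genMap_revGen_fghost_flip {i : ℕ} (hs : G.s e ∈ G.weightedTree) (h1 : 1 ≤ i)
    (h2 : i ≤ G.w e) :
    genMap K (revGen h) (fghost G K e i) = fedge (G.reverseTree h) K (.flip e i hs h1 h2) 1 := by
  simp [fedge, fghost, h1, h2, revGen, hs, RevEdge.weight]

lemma genMap_unrevGen_fvtx (v : G.V) :
    genMap K (unrevGen h) (fvtx (G.reverseTree h) K v) = fvtx G K v := by
  simp [fvtx, unrevGen]

lemma genMap_unrevGen_fedge_keep (hs : G.s e ∉ G.weightedTree) (i : ℕ) :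
    genMap K (unrevGen h) (fedge (G.reverseTree h) K (.keep e hs) i) = fedge G K e i := by
  by_cases hi : 1 ≤ i ∧ i ≤ G.w e <;> simp [fedge, hi, unrevGen, RevEdge.weight]

lemma genMap_unrevGen_fghost_keep (hs : G.s e ∉ G.weightedTree) (i : ℕ) :
    genMap K (unrevGen h) (fghost (G.reverseTree h) K (.keep e hs) i) = fghost G K e i := by
  by_cases hi : 1 ≤ i ∧ i ≤ G.w e <;> simp [fghost, hi, unrevGen, RevEdge.weight]

lemma genMap_unrevGen_fedge_flip {k : ℕ} (hs : G.s e ∈ G.weightedTree) (h1 : 1 ≤ k)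
    (h2 : k ≤ G.w e) :
    genMap K (unrevGen h) (fedge (G.reverseTree h) K (.flip e k hs h1 h2) 1) = fghost G K e k := by
  simp [fedge, fghost, h1, h2, unrevGen, RevEdge.weight]

lemma genMap_unrevGen_fghost_flip {k : ℕ} (hs : G.s e ∈ G.weightedTree) (h1 : 1 ≤ k)
    (h2 : k ≤ G.w e) :
    genMap K (unrevGen h) (fghost (G.reverseTree h) K (.flip e k hs h1 h2) 1) = fedge G K e k := by
  simp [fedge, fghost, h1, h2, unrevGen, RevEdge.weight]

end images

lemma wmk_genMap_revGen_ck1 {v : G.V} {e f : G.E} (he : G.s e = v) (hf : G.s f = v) :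
    wmk _ K (genMap K (revGen h)
      (∑ i ∈ Finset.Icc 1 (G.vw v), fghost G K e i * fedge G K f i)) =
      wmk _ K (genMap K (revGen h) (if e = f then fvtx G K (G.r e) else 0)) := by
  by_cases hv : v ∈ G.weightedTree
  · subst he
    obtain rfl := h.eq_of_s_eq hv hf.symm
    have hsum : genMap K (revGen h)
        (∑ i ∈ Finset.Icc 1 (G.vw (G.s e)), fghost G K e i * fedge G K e i) =
          ∑ x ∈ ((G.reverseTree h).rowFinite (G.r e)).toFinset,
            fedge _ K x 1 * fghost _ K x 1 := by
      rw [map_sum, h.vw_s hv, sum_rowFinite_reverseTree_r h hv]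
      intro k h1 h2
      rw [map_mul, genMap_revGen_fghost_flip K h hv h1 h2, genMap_revGen_fedge_flip K h hv h1 h2]
    have hvw := (vw_reverseTree_r h hv).ge
    rw [hsum, if_pos rfl, genMap_revGen_fvtx,
      wmk_eq_of_wRel K (WRel.ck2 (G := G.reverseTree h) (G.r e) 1 1 le_rfl hvw le_rfl hvw),
      if_pos rfl]
  · have hse : G.s e ∉ G.weightedTree := he ▸ hv
    have hsf : G.s f ∉ G.weightedTree := hf ▸ hv
    have hsum : genMap K (revGen h)
        (∑ i ∈ Finset.Icc 1 (G.vw v), fghost G K e i * fedge G K f i) =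
          ∑ i ∈ Finset.Icc 1 ((G.reverseTree h).vw v),
            fghost _ K (RevEdge.keep e hse) i * fedge _ K (RevEdge.keep f hsf) i := by
      simp only [map_sum, map_mul, vw_reverseTree_of_not_mem h hv,
        genMap_revGen_fghost_keep K h hse, genMap_revGen_fedge_keep K h hsf]
    rw [hsum, wmk_eq_of_wRel K
      (WRel.ck1 (G := G.reverseTree h) v (.keep e hse) (.keep f hsf) he hf)]
    by_cases hef : e = f
    · subst hef
      simp [genMap_revGen_fvtx, RevEdge.rng]
    · simp [hef]

lemma wmk_genMap_revGen_ck2 {v : G.V} {i j : ℕ} (hi1 : 1 ≤ i) (hi2 : i ≤ G.vw v)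
    (hj1 : 1 ≤ j) (hj2 : j ≤ G.vw v) :
    wmk _ K (genMap K (revGen h)
      (∑ e ∈ (G.rowFinite v).toFinset, fedge G K e i * fghost G K e j)) =
      wmk _ K (genMap K (revGen h) (if i = j then fvtx G K v else 0)) := by
  by_cases hv : v ∈ G.weightedTree
  · obtain ⟨e, rfl⟩ := exists_s_eq_of_vw_ne_zero (by omega : G.vw v ≠ 0)
    rw [h.vw_s hv] at hi2 hj2
    have hvw := (vw_reverseTree_r h hv).ge
    rw [h.rowFinite_toFinset_eq hv, Finset.sum_singleton, map_mul,
      genMap_revGen_fedge_flip K h hv hi1 hi2, genMap_revGen_fghost_flip K h hv hj1 hj2]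
    have hrel := wmk_eq_of_wRel K (WRel.ck1 (G := G.reverseTree h) (G.r e) (.flip e i hv hi1 hi2)
      (.flip e j hv hj1 hj2) rfl rfl)
    rw [vw_reverseTree_r h hv, Finset.Icc_self, Finset.sum_singleton] at hrel
    rw [hrel]
    by_cases hij : i = j
    · subst hij
      simp [genMap_revGen_fvtx, RevEdge.rng]
    · simp [hij]
  · have hsum : genMap K (revGen h)
        (∑ e ∈ (G.rowFinite v).toFinset, fedge G K e i * fghost G K e j) =
          ∑ x ∈ ((G.reverseTree h).rowFinite v).toFinset, fedge _ K x i * fghost _ K x j := by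
      rw [map_sum, sum_rowFinite_reverseTree_of_not_mem h hv]
      intro e hs
      rw [map_mul, genMap_revGen_fedge_keep K h hs, genMap_revGen_fghost_keep K h hs]
    have hvw := vw_reverseTree_of_not_mem h hv
    rw [hsum, wmk_eq_of_wRel K
        (WRel.ck2 (G := G.reverseTree h) v i j hi1 (hvw ▸ hi2) hj1 (hvw ▸ hj2)),
      apply_ite (genMap K _), genMap_revGen_fvtx, map_zero]

lemma wmk_genMap_unrevGen_ck1 {a : G.V} {x y : G.RevEdge} (hx : x.src = a) (hy : y.src = a) :
    wmk G K (genMap K (unrevGen h) (∑ i ∈ Finset.Icc 1 ((G.reverseTree h).vw a),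
      fghost _ K x i * fedge _ K y i)) =
      wmk G K (genMap K (unrevGen h) (if x = y then fvtx _ K ((G.reverseTree h).r x) else 0)) := by
  by_cases ha : a ∈ G.weightedTree
  · obtain ⟨g, k, hg, hk1, hk2, rfl⟩ := RevEdge.exists_eq_flip (hx ▸ ha)
    obtain ⟨l, hl1, hl2, rfl⟩ := RevEdge.exists_eq_flip_of_src_eq h hg (hy.trans hx.symm)
    have hx : G.r g = a := hx
    subst hx
    rw [vw_reverseTree_r h hg, Finset.Icc_self, Finset.sum_singleton, map_mul,
      genMap_unrevGen_fghost_flip K h hg hk1 hk2, genMap_unrevGen_fedge_flip K h hg hl1 hl2]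
    have hvw := h.vw_s hg
    have hrel := wmk_eq_of_wRel K
      (WRel.ck2 (G := G) (G.s g) k l hk1 (hvw ▸ hk2) hl1 (hvw ▸ hl2))
    rw [h.rowFinite_toFinset_eq hg, Finset.sum_singleton] at hrel
    rw [hrel]
    by_cases hkl : k = l
    · subst hkl
      simp [genMap_unrevGen_fvtx, RevEdge.rng]
    · simp [hkl]
  · obtain ⟨e, hse, rfl⟩ := RevEdge.exists_eq_keep (hx ▸ ha)
    obtain ⟨f, hsf, rfl⟩ := RevEdge.exists_eq_keep (hy ▸ ha)
    simp only [map_sum (genMap K (unrevGen h)), map_mul (genMap K (unrevGen h)),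
      vw_reverseTree_of_not_mem h ha, genMap_unrevGen_fghost_keep K h hse,
      genMap_unrevGen_fedge_keep K h hsf]
    rw [wmk_eq_of_wRel K (WRel.ck1 a e f hx hy)]
    by_cases hef : e = f
    · subst hef
      simp [genMap_unrevGen_fvtx, RevEdge.rng]
    · simp [hef]

lemma wmk_genMap_unrevGen_ck2 {a : G.V} {i j : ℕ} (hi1 : 1 ≤ i)
    (hi2 : i ≤ (G.reverseTree h).vw a) (hj1 : 1 ≤ j) (hj2 : j ≤ (G.reverseTree h).vw a) :
    wmk G K (genMap K (unrevGen h) (∑ x ∈ ((G.reverseTree h).rowFinite a).toFinset,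
      fedge _ K x i * fghost _ K x j)) =
      wmk G K (genMap K (unrevGen h) (if i = j then fvtx _ K a else 0)) := by
  by_cases ha : a ∈ G.weightedTree
  · obtain ⟨x, hx⟩ := exists_s_eq_of_vw_ne_zero (G := G.reverseTree h) (v := a) (by omega)
    obtain ⟨g, k, hg, hk1, hk2, rfl⟩ := RevEdge.exists_eq_flip (hx ▸ ha)
    have hga : G.r g = a := hx
    subst hga
    rw [vw_reverseTree_r h hg] at hi2 hj2
    obtain rfl : i = 1 := by omega
    obtain rfl : j = 1 := by omega
    rw [map_sum, sum_rowFinite_reverseTree_r h hg (f := fun k => fghost G K g k * fedge G K g k)]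
    · rw [← h.vw_s hg, wmk_eq_of_wRel K (WRel.ck1 (G.s g) g g rfl rfl), if_pos rfl, if_pos rfl,
        genMap_unrevGen_fvtx]
    · intro k h1 h2
      rw [map_mul, genMap_unrevGen_fedge_flip K h hg h1 h2,
        genMap_unrevGen_fghost_flip K h hg h1 h2]
  · have hvw := vw_reverseTree_of_not_mem h ha
    rw [map_sum, sum_rowFinite_reverseTree_of_not_mem h ha
      (f := fun e => fedge G K e i * fghost G K e j)]
    · rw [wmk_eq_of_wRel K (WRel.ck2 a i j hi1 (hvw ▸ hi2) hj1 (hvw ▸ hj2)),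
        apply_ite (genMap K _), genMap_unrevGen_fvtx, map_zero]
    · intro e hs
      rw [map_mul, genMap_unrevGen_fedge_keep K h hs, genMap_unrevGen_fghost_keep K h hs]

noncomputable def reverseTreeAlgEquiv :
    WLPA G K ≃ₐ[K] WLPA (G.reverseTree h) K :=
  algEquivOfGenEquiv K (revGenEquiv h)
    (wmk_genMap_eq_of_wRel K (revGen h) Function.injective_id (fun _ => rfl) (gsrc_revGen h)
      (grng_revGen h) (fun _ _ _ he hf => wmk_genMap_revGen_ck1 K h he hf)
      (fun _ _ _ hi1 hi2 hj1 hj2 => wmk_genMap_revGen_ck2 K h hi1 hi2 hj1 hj2))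
    (wmk_genMap_eq_of_wRel K (unrevGen h) Function.injective_id (fun _ => rfl) (gsrc_unrevGen h)
      (grng_unrevGen h) (fun _ _ _ hx hy => wmk_genMap_unrevGen_ck1 K h hx hy)
      (fun _ _ _ hi1 hi2 hj1 hj2 => wmk_genMap_unrevGen_ck2 K h hi1 hi2 hj1 hj2))

end WGraph

/-- If `(E,w)` satisfies Condition (LPA), there is a row-finite weighted graph
`(Ẽ,w̃)` in which ranges of weighted edges are sinks and no vertex emits or receives two
distinct weighted edges, with `L_K(Ẽ,w̃) ≅ L_K(E,w)`. -/
theorem stmt1 (K : Type) [Field K] (G : WGraph) (h : G.LPA) :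
    ∃ G' : WGraph,
      (∀ e, G'.Weighted e → ∀ f, G'.s f ≠ G'.r e) ∧
      (∀ e f, G'.Weighted e → G'.Weighted f → G'.s e = G'.s f → e = f) ∧
      (∀ e f, G'.Weighted e → G'.Weighted f → G'.r e = G'.r f → e = f) ∧
      Nonempty (WLPA G' K ≃ₐ[K] WLPA G K) :=
  ⟨G.reverseTree h, G.reverseTree_s_ne_r_of_weighted h, G.reverseTree_eq_of_weighted_of_s_eq h,
    G.reverseTree_eq_of_weighted_of_r_eq h, ⟨(WGraph.reverseTreeAlgEquiv K h).symm⟩⟩
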